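/- arXiv:2012.14050 — 2 statements merged into one kernel-verified Lean document; each statement's English description precedes it below -/
import Mathlib

section
/- Appendix A proposition (perturbation estimate for iterated vector field action): Let Ξ = (X^τ(τ,y,z), ρX^ρ(τ,y,z), X^y(τ,y,z), X^z(τ,y,z)) and let ξ = Ξ + h where each component of h is O(ρ²) as ρ → 0 (uniformly with all derivatives bounded appropriately on compact sets). Then for every n ≥ 0, (λⁿ/n!)ξⁿx^μ = (λⁿ/n!)Ξⁿx^μ + ε_n^μ where Ξⁿx^μ has asymptotic behavior (O(1), O(ρ), O(1), O(1)) and ε_n^μ = (O(ρ²), O(ρ²), O(ρ²), O(ρ²)) as ρ → 0. -/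
noncomputable section

abbrev V4 := Fin 4 → ℝ

/-- Partial derivative in the i-th coordinate direction. -/
def pd (i : Fin 4) (f : V4 → ℝ) (x : V4) : ℝ := fderiv ℝ f x (Pi.single i 1)

/-- Action of a vector field on a function: (ξf)(x) = ξ^μ(x)∂_μf(x). -/
def act (ξ : V4 → V4) (f : V4 → ℝ) : V4 → ℝ := fun x => ∑ ν, ξ x ν * pd ν f x

/-- `IsO k f` : f = O(ρ^k) as ρ → 0, locally uniformly on compact sets in (τ,y,z). -/
def IsO (k : ℕ) (f : V4 → ℝ) : Prop :=
  ∀ K : Set (ℝ × ℝ × ℝ), IsCompact K →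
    ∃ C ρ₀ : ℝ, 0 < C ∧ 0 < ρ₀ ∧
      ∀ x : V4, (x 0, x 2, x 3) ∈ K → 0 < x 1 → x 1 < ρ₀ → |f x| ≤ C * (x 1) ^ k

/-- The μ-th coordinate function x^μ. -/
def coordFn (μ : Fin 4) : V4 → ℝ := fun x => x μ


lemma pd_contDiff {f : V4 → ℝ} (hf : ContDiff ℝ (⊤ : ℕ∞) f) (i : Fin 4) : ContDiff ℝ (⊤ : ℕ∞) (pd i f) := by
  have h1 : ContDiff ℝ (⊤ : ℕ∞) (fderiv ℝ f) := hf.fderiv_right (by simp)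
  exact h1.clm_apply contDiff_const

lemma pd_add {f g : V4 → ℝ} (hf : Differentiable ℝ f) (hg : Differentiable ℝ g) (i : Fin 4) :
    pd i (fun x => f x + g x) = fun x => pd i f x + pd i g x := by
  funext x
  simp only [pd, fderiv_fun_add (hf x) (hg x), ContinuousLinearMap.add_apply]

lemma pd_mul {f g : V4 → ℝ} (hf : Differentiable ℝ f) (hg : Differentiable ℝ g) (i : Fin 4) :
    pd i (fun x => f x * g x) = fun x => f x * pd i g x + g x * pd i f x := by
  funext x
  simp only [pd, fderiv_fun_mul (hf x) (hg x), ContinuousLinearMap.add_apply,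
    ContinuousLinearMap.smul_apply, smul_eq_mul]

lemma pd_const (c : ℝ) (i : Fin 4) : pd i (fun _ => c) = fun _ => 0 := by
  funext x; simp [pd]

lemma pd_eval_snd {f : V4 → ℝ} (hf : ContDiff ℝ (⊤ : ℕ∞) f) (i j : Fin 4) (x : V4) :
    pd i (pd j f) x = fderiv ℝ (fderiv ℝ f) x (Pi.single i 1) (Pi.single j 1) := by
  have hd : ContDiff ℝ (⊤ : ℕ∞) (fderiv ℝ f) := hf.fderiv_right (by simp)
  have hdx : DifferentiableAt ℝ (fderiv ℝ f) x := (hd.differentiable (by simp)) x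
  have : pd j f = fun y => fderiv ℝ f y (Pi.single j 1) := rfl
  rw [pd, this, fderiv_clm_apply hdx (differentiableAt_const _)]
  simp

lemma pd_comm {f : V4 → ℝ} (hf : ContDiff ℝ (⊤ : ℕ∞) f) (i j : Fin 4) :
    pd i (pd j f) = pd j (pd i f) := by
  funext x
  have hsym := (hf.contDiffAt (x := x)).isSymmSndFDerivAt (by norm_num; exact WithTop.coe_le_coe.mpr le_top)
  rw [pd_eval_snd hf i j x, pd_eval_snd hf j i x]
  exact hsym _ _


def pdL : List (Fin 4) → (V4 → ℝ) → (V4 → ℝ)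
  | [], f => f
  | (a :: L), f => pdL L (pd a f)

lemma pdL_contDiff : ∀ (L : List (Fin 4)) {f : V4 → ℝ}, ContDiff ℝ (⊤ : ℕ∞) f → ContDiff ℝ (⊤ : ℕ∞) (pdL L f)
  | [], _, hf => hf
  | (a :: L), _, hf => pdL_contDiff L (pd_contDiff hf a)

lemma pdL_append (A B : List (Fin 4)) (f : V4 → ℝ) : pdL (A ++ B) f = pdL B (pdL A f) := by
  induction A generalizing f with
  | nil => rfl
  | cons a A ih => simp [pdL, ih]

lemma pd_pdL {f : V4 → ℝ} (hf : ContDiff ℝ (⊤ : ℕ∞) f) (j : Fin 4) :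
    ∀ L, pd j (pdL L f) = pdL L (pd j f) := by
  intro L
  induction L generalizing f with
  | nil => rfl
  | cons a L ih =>
    show pd j (pdL L (pd a f)) = pdL L (pd a (pd j f))
    rw [ih (pd_contDiff hf a), pd_comm hf a j]

lemma pdL_add {f g : V4 → ℝ} (hf : ContDiff ℝ (⊤ : ℕ∞) f) (hg : ContDiff ℝ (⊤ : ℕ∞) g) :
    ∀ L, pdL L (fun x => f x + g x) = fun x => pdL L f x + pdL L g x := by
  intro L
  induction L generalizing f g with
  | nil => rfl
  | cons a L ih =>
    show pdL L (pd a fun x => f x + g x) = _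
    rw [pd_add (hf.differentiable (by simp)) (hg.differentiable (by simp))]
    exact ih (pd_contDiff hf a) (pd_contDiff hg a)

lemma pdL_zero : ∀ L, pdL L (fun _ : V4 => (0:ℝ)) = fun _ => 0
  | [] => rfl
  | (a :: L) => by show pdL L (pd a fun _ => (0:ℝ)) = _; rw [pd_const]; exact pdL_zero L

/-! IsO lemmas -/

lemma IsO.mono {k k' : ℕ} (hk : k' ≤ k) {f : V4 → ℝ} (h : IsO k f) : IsO k' f := by
  intro K hK
  obtain ⟨C, ρ₀, hC, hρ, hb⟩ := h K hK
  refine ⟨C, min ρ₀ 1, hC, by positivity, fun x hx h1 h2 => ?_⟩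
  have h3 := hb x hx h1 (lt_of_lt_of_le h2 (min_le_left _ _))
  refine h3.trans (mul_le_mul_of_nonneg_left ?_ hC.le)
  exact pow_le_pow_of_le_one h1.le (le_of_lt (lt_of_lt_of_le h2 (min_le_right _ _))) hk

lemma IsO.add {k : ℕ} {f g : V4 → ℝ} (hf : IsO k f) (hg : IsO k g) :
    IsO k (fun x => f x + g x) := by
  intro K hK
  obtain ⟨C₁, ρ₁, hC₁, hρ₁, hb₁⟩ := hf K hK
  obtain ⟨C₂, ρ₂, hC₂, hρ₂, hb₂⟩ := hg K hK
  refine ⟨C₁ + C₂, min ρ₁ ρ₂, by positivity, by positivity, fun x hx h1 h2 => ?_⟩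
  have := abs_add_le (f x) (g x)
  have b1 := hb₁ x hx h1 (lt_of_lt_of_le h2 (min_le_left _ _))
  have b2 := hb₂ x hx h1 (lt_of_lt_of_le h2 (min_le_right _ _))
  calc |f x + g x| ≤ |f x| + |g x| := abs_add_le _ _
    _ ≤ C₁ * x 1 ^ k + C₂ * x 1 ^ k := add_le_add b1 b2
    _ = (C₁ + C₂) * x 1 ^ k := by ring

lemma IsO.mul {k l : ℕ} {f g : V4 → ℝ} (hf : IsO k f) (hg : IsO l g) :
    IsO (k + l) (fun x => f x * g x) := by
  intro K hK
  obtain ⟨C₁, ρ₁, hC₁, hρ₁, hb₁⟩ := hf K hK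
  obtain ⟨C₂, ρ₂, hC₂, hρ₂, hb₂⟩ := hg K hK
  refine ⟨C₁ * C₂, min ρ₁ ρ₂, by positivity, by positivity, fun x hx h1 h2 => ?_⟩
  have b1 := hb₁ x hx h1 (lt_of_lt_of_le h2 (min_le_left _ _))
  have b2 := hb₂ x hx h1 (lt_of_lt_of_le h2 (min_le_right _ _))
  calc |f x * g x| = |f x| * |g x| := abs_mul _ _
    _ ≤ (C₁ * x 1 ^ k) * (C₂ * x 1 ^ l) :=
        mul_le_mul b1 b2 (abs_nonneg _) (by positivity)
    _ = C₁ * C₂ * x 1 ^ (k + l) := by rw [pow_add]; ring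

lemma IsO.const_mul {k : ℕ} {f : V4 → ℝ} (c : ℝ) (hf : IsO k f) :
    IsO k (fun x => c * f x) := by
  intro K hK
  obtain ⟨C, ρ₀, hC, hρ, hb⟩ := hf K hK
  refine ⟨(|c| + 1) * C, ρ₀, by positivity, hρ, fun x hx h1 h2 => ?_⟩
  have := hb x hx h1 h2
  calc |c * f x| = |c| * |f x| := abs_mul _ _
    _ ≤ (|c| + 1) * (C * x 1 ^ k) := by
        apply mul_le_mul (by linarith [abs_nonneg c]) this (abs_nonneg _) (by positivity)
    _ = (|c| + 1) * C * x 1 ^ k := by ring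

lemma isO_zero (k : ℕ) : IsO k (fun _ => (0:ℝ)) := fun _ _ =>
  ⟨1, 1, one_pos, one_pos, fun x _ h1 _ => by simp; positivity⟩

/-- Bound for a continuous function on a slab `K × [0,1]`. -/
lemma exists_slab_bound (f : V4 → ℝ) (hf : Continuous f) {K : Set (ℝ × ℝ × ℝ)}
    (hK : IsCompact K) :
    ∃ M : ℝ, 0 < M ∧ ∀ x : V4, (x 0, x 2, x 3) ∈ K → x 1 ∈ Set.Icc (0:ℝ) 1 → |f x| ≤ M := by
  set φ : (ℝ × ℝ × ℝ) × ℝ → V4 := fun p => ![p.1.1, p.2, p.1.2.1, p.1.2.2] with hφdef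
  have hφ : Continuous φ := by
    apply continuous_pi
    intro i
    fin_cases i <;> simp [hφdef] <;> fun_prop
  have hS : IsCompact (φ '' (K ×ˢ Set.Icc (0:ℝ) 1)) := (hK.prod isCompact_Icc).image hφ
  obtain ⟨M, hM⟩ := hS.exists_bound_of_continuousOn hf.continuousOn
  refine ⟨max M 0 + 1, by positivity, fun x hx h1 => ?_⟩
  have hxmem : x ∈ φ '' (K ×ˢ Set.Icc (0:ℝ) 1) := by
    refine ⟨((x 0, x 2, x 3), x 1), Set.mk_mem_prod hx h1, ?_⟩
    funext i; fin_cases i <;> rfl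
  have := hM x hxmem
  rw [Real.norm_eq_abs] at this
  calc |f x| ≤ M := this
    _ ≤ max M 0 + 1 := by have := le_max_left M 0; linarith

lemma isO_of_continuous {f : V4 → ℝ} (hf : Continuous f) : IsO 0 f := by
  intro K hK
  obtain ⟨M, hM, hb⟩ := exists_slab_bound f hf hK
  refine ⟨M, 1, hM, one_pos, fun x hx h1 h2 => ?_⟩
  simpa using hb x hx ⟨h1.le, h2.le⟩


/-- `Vz f` : f vanishes on the hyperplane ρ = 0. -/
def Vz (f : V4 → ℝ) : Prop := ∀ x : V4, x 1 = 0 → f x = 0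

lemma update_one_eq (x : V4) (s : ℝ) :
    Function.update x 1 s = x + (s - x 1) • (Pi.single 1 1 : V4) := by
  funext i
  by_cases hi : i = 1
  · subst hi; simp
  · simp [Function.update_of_ne hi, Pi.single_eq_of_ne hi]

lemma pd_hasDerivAt_update (f : V4 → ℝ) (hf : Differentiable ℝ f) (x : V4) (t : ℝ) :
    HasDerivAt (fun s => f (Function.update x 1 s)) (pd 1 f (Function.update x 1 t)) t := by
  have hline : HasDerivAt (fun s : ℝ => x + (s - x 1) • (Pi.single 1 1 : V4))
      (Pi.single 1 1 : V4) t := by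
    simpa using (((hasDerivAt_id t).sub_const (x 1)).smul_const (Pi.single 1 1 : V4)).const_add x
  have h2 := (hf (Function.update x 1 t)).hasFDerivAt
  rw [update_one_eq] at h2
  have := h2.comp_hasDerivAt t hline
  simp only [Function.comp_def] at this
  have e1 : (fun s => f (Function.update x 1 s)) = fun s => f (x + (s - x 1) • (Pi.single 1 1 : V4)) := by
    funext s; rw [update_one_eq]
  rw [e1]; simp only [pd]; rw [update_one_eq]; exact this

lemma vz_pd {f : V4 → ℝ} (hf : Differentiable ℝ f) {i : Fin 4} (hi : i ≠ 1) (hv : Vz f) :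
    Vz (pd i f) := by
  intro x hx
  have hline : ∀ s : ℝ, (x + s • (Pi.single i 1 : V4)) 1 = 0 := by
    intro s
    have : (Pi.single i 1 : V4) 1 = 0 := Pi.single_eq_of_ne (Ne.symm hi) 1
    simp [this, hx]
  have hzero : (fun s : ℝ => f (x + s • (Pi.single i 1 : V4))) = fun _ => 0 := by
    funext s; exact hv _ (hline s)
  have hl : HasDerivAt (fun s : ℝ => x + s • (Pi.single i 1 : V4)) (Pi.single i 1 : V4) 0 := by
    simpa using ((hasDerivAt_id (0:ℝ)).smul_const (Pi.single i 1 : V4)).const_add x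
  have h2 := (hf (x + (0:ℝ) • (Pi.single i 1 : V4))).hasFDerivAt
  have hc := h2.comp_hasDerivAt 0 hl
  simp only [Function.comp_def] at hc
  rw [hzero] at hc
  have h0 : HasDerivAt (fun _ : ℝ => (0:ℝ)) 0 0 := hasDerivAt_const _ _
  have := hc.unique h0
  have hx0 : x + (0:ℝ) • (Pi.single i 1 : V4) = x := by simp
  rw [hx0] at this
  exact this

lemma vz_of_isO {k : ℕ} (hk : 1 ≤ k) {f : V4 → ℝ} (hf : Continuous f) (h : IsO k f) :
    Vz f := by
  intro x hx
  obtain ⟨C, ρ₀, hC, hρ, hb⟩ := h {(x 0, x 2, x 3)} isCompact_singleton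
  have hupd : Continuous (fun t : ℝ => f (Function.update x 1 t)) :=
    hf.comp (continuous_const.update 1 continuous_id)
  have hx0 : Function.update x 1 0 = x := by rw [← hx]; exact Function.update_eq_self 1 x
  have ht1 : Filter.Tendsto (fun t : ℝ => f (Function.update x 1 t)) (nhdsWithin 0 (Set.Ioi 0))
      (nhds (f x)) := by
    have := hupd.tendsto 0
    rw [hx0] at this
    exact this.mono_left nhdsWithin_le_nhds
  have ht2 : Filter.Tendsto (fun t : ℝ => f (Function.update x 1 t)) (nhdsWithin 0 (Set.Ioi 0))
      (nhds 0) := by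
    apply squeeze_zero_norm' (a := fun t => C * t ^ k)
    · filter_upwards [Ioo_mem_nhdsGT_of_mem (Set.left_mem_Ico.2 hρ)] with t ht
      have hmem : ((Function.update x 1 t) 0, (Function.update x 1 t) 2,
          (Function.update x 1 t) 3) ∈ ({(x 0, x 2, x 3)} : Set (ℝ × ℝ × ℝ)) := by
        simp [Function.update_of_ne]
      have := hb _ hmem (by simpa using ht.1) (by simpa using ht.2)
      simpa [Real.norm_eq_abs] using this
    · have : Filter.Tendsto (fun t : ℝ => C * t ^ k) (nhds 0) (nhds (C * 0 ^ k)) :=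
        (continuous_const.mul (continuous_pow k)).tendsto 0
      rw [zero_pow (by omega), mul_zero] at this
      exact this.mono_left nhdsWithin_le_nhds
  exact tendsto_nhds_unique ht1 ht2

/-- One mean value theorem: vanishing at ρ=0 plus bounded ∂ρ gives O(ρ). -/
lemma isO_one_of_vz {f : V4 → ℝ} (hf : ContDiff ℝ (⊤ : ℕ∞) f) (hv : Vz f) : IsO 1 f := by
  intro K hK
  obtain ⟨M, hM, hb⟩ := exists_slab_bound (pd 1 f) (pd_contDiff hf 1).continuous hK
  refine ⟨M, 1, hM, one_pos, fun x hx h1 h2 => ?_⟩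
  set g : ℝ → ℝ := fun s => f (Function.update x 1 s) with hg
  have hder : ∀ s ∈ Set.Icc 0 (x 1), HasDerivWithinAt g
      (pd 1 f (Function.update x 1 s)) (Set.Icc 0 (x 1)) s := fun s _ =>
    (pd_hasDerivAt_update f (hf.differentiable (by simp)) x s).hasDerivWithinAt
  have hbound : ∀ s ∈ Set.Ico (0:ℝ) (x 1), ‖pd 1 f (Function.update x 1 s)‖ ≤ M := by
    intro s hs
    rw [Real.norm_eq_abs]
    apply hb
    · simpa [Function.update_of_ne] using hx
    · simp only [Function.update_self]
      exact ⟨hs.1, le_of_lt (lt_of_lt_of_le hs.2 h2.le)⟩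
  have := norm_image_sub_le_of_norm_deriv_le_segment' hder hbound (x 1)
      (Set.right_mem_Icc.2 h1.le)
  have hg1 : g (x 1) = f x := by rw [hg]; simp [Function.update_eq_self]
  have hg0 : g 0 = 0 := hv _ (by simp)
  rw [hg0, hg1, sub_zero, sub_zero, Real.norm_eq_abs] at this
  simpa [pow_one] using this

/-- Two mean value theorems: f, ∂ρ f vanish at ρ=0 gives O(ρ²). -/
lemma isO_two_of_vz {f : V4 → ℝ} (hf : ContDiff ℝ (⊤ : ℕ∞) f) (hv : Vz f) (hv1 : Vz (pd 1 f)) :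
    IsO 2 f := by
  intro K hK
  obtain ⟨M, hM, hb⟩ := exists_slab_bound (pd 1 (pd 1 f)) (pd_contDiff (pd_contDiff hf 1) 1).continuous hK
  refine ⟨M, 1, hM, one_pos, fun x hx h1 h2 => ?_⟩
  have hsub : ∀ s : ℝ, 0 ≤ s → s ≤ x 1 →
      ((Function.update x 1 s) 0, (Function.update x 1 s) 2, (Function.update x 1 s) 3) ∈ K ∧
      (Function.update x 1 s) 1 ∈ Set.Icc (0:ℝ) 1 := by
    intro s hs0 hs1
    constructor
    · simpa [Function.update_of_ne] using hx
    · simp only [Function.update_self]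
      exact ⟨hs0, hs1.trans h2.le⟩
  -- first: |pd 1 f (update x 1 s)| ≤ M * s for s ∈ [0, x 1]
  have inner : ∀ s ∈ Set.Icc (0:ℝ) (x 1), |pd 1 f (Function.update x 1 s)| ≤ M * s := by
    intro s hs
    have hder : ∀ t ∈ Set.Icc 0 s, HasDerivWithinAt (fun u => pd 1 f (Function.update x 1 u))
        (pd 1 (pd 1 f) (Function.update x 1 t)) (Set.Icc 0 s) t := fun t _ =>
      (pd_hasDerivAt_update (pd 1 f) ((pd_contDiff hf 1).differentiable (by simp)) x t).hasDerivWithinAt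
    have hbound : ∀ t ∈ Set.Ico (0:ℝ) s, ‖pd 1 (pd 1 f) (Function.update x 1 t)‖ ≤ M := by
      intro t ht
      rw [Real.norm_eq_abs]
      obtain ⟨m1, m2⟩ := hsub t ht.1 (le_of_lt (lt_of_lt_of_le ht.2 hs.2))
      exact hb _ m1 m2
    have := norm_image_sub_le_of_norm_deriv_le_segment' hder hbound s
        (Set.right_mem_Icc.2 hs.1)
    have h0 : pd 1 f (Function.update x 1 0) = 0 := hv1 _ (by simp)
    rw [h0, sub_zero, sub_zero, Real.norm_eq_abs] at this
    exact this
  -- second MVT for f itself with bound M * x 1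
  have hder : ∀ s ∈ Set.Icc 0 (x 1), HasDerivWithinAt (fun u => f (Function.update x 1 u))
      (pd 1 f (Function.update x 1 s)) (Set.Icc 0 (x 1)) s := fun s _ =>
    (pd_hasDerivAt_update f (hf.differentiable (by simp)) x s).hasDerivWithinAt
  have hbound : ∀ s ∈ Set.Ico (0:ℝ) (x 1), ‖pd 1 f (Function.update x 1 s)‖ ≤ M * x 1 := by
    intro s hs
    rw [Real.norm_eq_abs]
    refine (inner s ⟨hs.1, hs.2.le⟩).trans ?_
    exact mul_le_mul_of_nonneg_left hs.2.le hM.le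
  have := norm_image_sub_le_of_norm_deriv_le_segment' hder hbound (x 1)
      (Set.right_mem_Icc.2 h1.le)
  have hg1 : f (Function.update x 1 (x 1)) = f x := by rw [Function.update_eq_self]
  have hg0 : f (Function.update x 1 0) = 0 := hv _ (by simp)
  rw [hg0, hg1, sub_zero, sub_zero, Real.norm_eq_abs] at this
  calc |f x| ≤ M * x 1 * x 1 := this
    _ = M * x 1 ^ 2 := by ring


/-- `Good k f` : smooth and every mixed partial `D^α f` is `O(ρ^(k - #∂ρ's))`. -/
def Good (k : ℕ) (f : V4 → ℝ) : Prop :=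
  ContDiff ℝ (⊤ : ℕ∞) f ∧ ∀ L : List (Fin 4), IsO (k - L.count 1) (pdL L f)

lemma Good.smooth {k f} (h : Good k f) : ContDiff ℝ (⊤ : ℕ∞) f := h.1

lemma Good.isO {k f} (h : Good k f) : IsO k f := by
  have := h.2 []
  simpa [pdL] using this

lemma Good.mono {k k' : ℕ} (hk : k' ≤ k) {f} (h : Good k f) : Good k' f :=
  ⟨h.1, fun L => (h.2 L).mono (Nat.sub_le_sub_right hk _)⟩

lemma good_of_contDiff {f} (hf : ContDiff ℝ (⊤ : ℕ∞) f) : Good 0 f :=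
  ⟨hf, fun L => by
    rw [Nat.zero_sub]
    exact isO_of_continuous (pdL_contDiff L hf).continuous⟩

lemma good_zero (k : ℕ) : Good k (fun _ => 0) :=
  ⟨contDiff_const, fun L => by rw [pdL_zero]; exact isO_zero _⟩

lemma Good.congr {k f g} (h : Good k f) (he : ∀ x, f x = g x) : Good k g := by
  have : f = g := funext he
  rwa [this] at h

lemma Good.add {k : ℕ} {f g} (hf : Good k f) (hg : Good k g) : Good k (fun x => f x + g x) := by
  refine ⟨hf.1.add hg.1, fun L => ?_⟩
  rw [pdL_add hf.1 hg.1]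
  exact (hf.2 L).add (hg.2 L)

lemma count_cons_one (a : Fin 4) (L : List (Fin 4)) :
    (a :: L).count 1 = L.count 1 + (if a = 1 then 1 else 0) := by
  simp [List.count_cons]

lemma Good.pd {k : ℕ} {f} (h : Good k f) (i : Fin 4) :
    Good (k - (if i = 1 then 1 else 0)) (_root_.pd i f) := by
  refine ⟨pd_contDiff h.1 i, fun L => ?_⟩
  have h2 := h.2 (i :: L)
  have : pdL (i :: L) f = pdL L (_root_.pd i f) := rfl
  rw [this] at h2
  have hcount : k - (i :: L).count 1 = k - (if i = 1 then 1 else 0) - L.count 1 := by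
    rw [count_cons_one]; omega
  rwa [hcount] at h2

lemma Good.mul {k l : ℕ} {f g} (hf : Good k f) (hg : Good l g) :
    Good (k + l) (fun x => f x * g x) := by
  refine ⟨hf.1.mul hg.1, ?_⟩
  have main : ∀ (L : List (Fin 4)) (k l : ℕ) (f g : V4 → ℝ),
      ContDiff ℝ (⊤ : ℕ∞) f → ContDiff ℝ (⊤ : ℕ∞) g →
      (∀ L', IsO (k - L'.count 1) (pdL L' f)) →
      (∀ L', IsO (l - L'.count 1) (pdL L' g)) →
      IsO (k + l - L.count 1) (pdL L (fun x => f x * g x)) := by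
    intro L
    induction L with
    | nil =>
      intro k l f g _ _ h1 h2
      have := (show IsO k f by simpa [pdL] using h1 []).mul (show IsO l g by simpa [pdL] using h2 [])
      simpa [pdL] using this
    | cons a L ih =>
      intro k l f g hfs hgs h1 h2
      show IsO _ (pdL L (_root_.pd a (fun x => f x * g x)))
      rw [pd_mul (hfs.differentiable (by simp)) (hgs.differentiable (by simp))]
      rw [pdL_add (hfs.mul (pd_contDiff hgs a)) (hgs.mul (pd_contDiff hfs a))]
      set ea := (if a = 1 then 1 else 0) with hea
      have t1 : IsO (k + (l - ea) - L.count 1) (pdL L (fun x => f x * _root_.pd a g x)) := by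
        apply ih k (l - ea) f (_root_.pd a g) hfs (pd_contDiff hgs a) h1
        intro L'
        have := h2 (a :: L')
        have heq : pdL (a :: L') g = pdL L' (_root_.pd a g) := rfl
        rw [heq, count_cons_one] at this
        have : IsO (l - ea - L'.count 1) (pdL L' (_root_.pd a g)) := by
          have hc : l - (L'.count 1 + ea) = l - ea - L'.count 1 := by omega
          rwa [hc] at this
        exact this
      have t2 : IsO (l + (k - ea) - L.count 1) (pdL L (fun x => g x * _root_.pd a f x)) := by
        apply ih l (k - ea) g (_root_.pd a f) hgs (pd_contDiff hfs a) h2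
        intro L'
        have := h1 (a :: L')
        have heq : pdL (a :: L') f = pdL L' (_root_.pd a f) := rfl
        rw [heq, count_cons_one] at this
        have hc : k - (L'.count 1 + ea) = k - ea - L'.count 1 := by omega
        rwa [hc] at this
      have goal1 : IsO (k + l - (a :: L).count 1) (pdL L (fun x => f x * _root_.pd a g x)) := by
        apply t1.mono
        rw [count_cons_one]
        have : ea ≤ 1 := by rw [hea]; split <;> omega
        omega
      have goal2 : IsO (k + l - (a :: L).count 1) (pdL L (fun x => g x * _root_.pd a f x)) := by
        apply t2.mono
        rw [count_cons_one]
        have : ea ≤ 1 := by rw [hea]; split <;> omega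
        omega
      exact goal1.add goal2
  intro L
  exact main L k l f g hf.1 hg.1 hf.2 hg.2

lemma good_sum {k : ℕ} {F : Fin 4 → V4 → ℝ} (h : ∀ ν, Good k (F ν)) :
    Good k (fun x => ∑ ν, F ν x) := by
  have : (fun x => ∑ ν, F ν x) = fun x => F 0 x + (F 1 x + (F 2 x + F 3 x)) := by
    funext x; rw [Fin.sum_univ_four]; ring
  rw [this]
  exact (h 0).add ((h 1).add ((h 2).add (h 3)))

lemma good_act {c : Fin 4 → V4 → ℝ} {k : Fin 4 → ℕ} (hg : ∀ ν, Good (k ν) (c ν))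
    {f : V4 → ℝ} {m : ℕ} (hf : Good m f) {m' : ℕ}
    (hm : ∀ ν, m' ≤ k ν + (m - if ν = 1 then 1 else 0)) :
    Good m' (fun x => ∑ ν, c ν x * pd ν f x) := by
  apply good_sum
  intro ν
  exact ((hg ν).mul (hf.pd ν)).mono (hm ν)


lemma vz_pdL {L : List (Fin 4)} (hc : L.count 1 = 0) :
    ∀ {f : V4 → ℝ}, ContDiff ℝ (⊤ : ℕ∞) f → Vz f → Vz (pdL L f) := by
  induction L with
  | nil => intro f _ hv; exact hv
  | cons a L ih =>
    intro f hf hv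
    rw [count_cons_one] at hc
    have ha : a ≠ 1 := by intro h; rw [if_pos h] at hc; omega
    have hc' : L.count 1 = 0 := by omega
    exact ih hc' (pd_contDiff hf a) (vz_pd (hf.differentiable (by simp)) ha hv)

lemma count_one_split {L : List (Fin 4)} (h : L.count 1 = 1) :
    ∃ A B : List (Fin 4), L = A ++ 1 :: B ∧ A.count 1 = 0 ∧ B.count 1 = 0 := by
  induction L with
  | nil => simp at h
  | cons a L ih =>
    rw [count_cons_one] at h
    by_cases ha : a = 1
    · subst ha
      rw [if_pos rfl] at h
      exact ⟨[], L, rfl, rfl, by omega⟩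
    · rw [if_neg ha] at h
      obtain ⟨A, B, hAB, hA, hB⟩ := ih (by omega)
      exact ⟨a :: A, B, by rw [hAB]; rfl, by rw [count_cons_one, if_neg ha, hA], hB⟩

/-- The key lemma: an O(ρ²) perturbation with the stated derivative bounds is Good 2. -/
lemma good_two_of_bounds {f : V4 → ℝ} (hf : ContDiff ℝ (⊤ : ℕ∞) f)
    (h0 : IsO 2 f) (h1 : IsO 1 (pd 1 f)) : Good 2 f := by
  have hv : Vz f := vz_of_isO (by norm_num) hf.continuous h0
  have hv1 : Vz (pd 1 f) := vz_of_isO le_rfl (pd_contDiff hf 1).continuous h1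
  refine ⟨hf, fun L => ?_⟩
  rcases Nat.lt_or_ge (L.count 1) 2 with hlt | hge
  · interval_cases hL : (L.count 1)
    · -- count = 0 : O(ρ²)
      show IsO 2 (pdL L f)
      apply isO_two_of_vz (pdL_contDiff L hf) (vz_pdL hL hf hv)
      rw [pd_pdL hf 1]
      exact vz_pdL hL (pd_contDiff hf 1) hv1
    · -- count = 1 : O(ρ)
      show IsO 1 (pdL L f)
      obtain ⟨A, B, hAB, hA, hB⟩ := count_one_split hL
      apply isO_one_of_vz (pdL_contDiff L hf)
      have : pdL L f = pdL (A ++ B) (pd 1 f) := by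
        rw [hAB]
        rw [pdL_append A (1 :: B) f, pdL_append A B (pd 1 f)]
        show pdL B (pd 1 (pdL A f)) = pdL B (pdL A (pd 1 f))
        rw [pd_pdL hf 1 A]
      rw [this]
      apply vz_pdL (by simp [hA, hB]) (pd_contDiff hf 1) hv1
  · have : 2 - L.count 1 = 0 := by omega
    rw [this]
    exact isO_of_continuous (pdL_contDiff L hf).continuous

lemma good_coord1 : Good 1 (coordFn 1) := by
  refine ⟨(ContinuousLinearMap.proj (R := ℝ) (φ := fun _ : Fin 4 => ℝ) 1).contDiff, ?_⟩
  intro L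
  match L with
  | [] =>
    refine fun K _ => ⟨1, 1, one_pos, one_pos, fun x _ h1 _ => ?_⟩
    simp only [pdL, coordFn, List.count_nil, Nat.sub_zero, one_mul, pow_one]
    rw [abs_of_pos h1]
  | (a :: L') =>
    have hpd : pd a (coordFn 1) = fun _ => (Pi.single a 1 : V4) 1 := by
      funext x
      show fderiv ℝ (coordFn 1) x (Pi.single a 1) = _
      have : coordFn 1 = (ContinuousLinearMap.proj (R := ℝ) (φ := fun _ : Fin 4 => ℝ) 1) := rfl
      rw [this, ContinuousLinearMap.fderiv]
      rfl
    show IsO _ (pdL L' (pd a (coordFn 1)))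
    rw [hpd]
    by_cases ha : a = 1
    · have hc : (1 : ℕ) - (a :: L').count 1 = 0 := by
        rw [count_cons_one, if_pos ha]; omega
      rw [hc]
      exact isO_of_continuous (pdL_contDiff L' contDiff_const).continuous
    · have : (Pi.single a 1 : V4) 1 = 0 := Pi.single_eq_of_ne (Ne.symm ha) 1
      rw [this, pdL_zero]
      exact isO_zero _


/-- Appendix A proposition: write ξ = Ξ + h with
Ξ = (X^τ(τ,y,z), ρX^ρ(τ,y,z), X^y(τ,y,z), X^z(τ,y,z)) and h = O(ρ²).
Then for every n, (λⁿ/n!)ξⁿx^μ = (λⁿ/n!)Ξⁿx^μ + ε_n^μ where Ξⁿx^μ is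
(O(1), O(ρ), O(1), O(1)) and each ε_n^μ is O(ρ²) as ρ → 0. -/
theorem appendixA_proposition
    (Xτ Xρ Xy Xz : ℝ × ℝ × ℝ → ℝ)
    (hXτ : ContDiff ℝ (⊤ : ℕ∞) Xτ) (hXρ : ContDiff ℝ (⊤ : ℕ∞) Xρ)
    (hXy : ContDiff ℝ (⊤ : ℕ∞) Xy) (hXz : ContDiff ℝ (⊤ : ℕ∞) Xz)
    (h : V4 → V4) (hsm : ContDiff ℝ (⊤ : ℕ∞) h)
    (hO : ∀ μ : Fin 4, IsO 2 (fun x => h x μ))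
    (hOd : ∀ μ : Fin 4, IsO 2 (fun x => pd 0 (fun p => h p μ) x)
            ∧ IsO 2 (fun x => pd 2 (fun p => h p μ) x)
            ∧ IsO 2 (fun x => pd 3 (fun p => h p μ) x)
            ∧ IsO 1 (fun x => pd 1 (fun p => h p μ) x))
    (Ξ : V4 → V4)
    (hΞ : ∀ x : V4, Ξ x = ![Xτ (x 0, x 2, x 3), x 1 * Xρ (x 0, x 2, x 3),
                             Xy (x 0, x 2, x 3), Xz (x 0, x 2, x 3)])
    (ξ : V4 → V4) (hξ : ∀ x, ξ x = Ξ x + h x) :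
    ∀ (lam : ℝ) (n : ℕ),
      (∀ μ : Fin 4, IsO (if μ = 1 then 1 else 0) ((act Ξ)^[n] (coordFn μ)))
      ∧ ∃ ε : Fin 4 → V4 → ℝ,
          (∀ μ, IsO 2 (ε μ)) ∧
          ∀ (μ : Fin 4) (x : V4),
            lam ^ n / n.factorial * (act ξ)^[n] (coordFn μ) x
              = lam ^ n / n.factorial * (act Ξ)^[n] (coordFn μ) x + ε μ x := by
  classical
  -- weights
  set w : Fin 4 → ℕ := fun μ => if μ = 1 then 1 else 0 with hw
  -- smoothness of the projection
  have hπ : ContDiff ℝ (⊤ : ℕ∞) (fun x : V4 => (x 0, x 2, x 3)) :=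
    (ContinuousLinearMap.proj (R := ℝ) (φ := fun _ : Fin 4 => ℝ) 0).contDiff.prodMk
      (((ContinuousLinearMap.proj (R := ℝ) (φ := fun _ : Fin 4 => ℝ) 2).contDiff).prodMk
        (ContinuousLinearMap.proj (R := ℝ) (φ := fun _ : Fin 4 => ℝ) 3).contDiff)
  have good_pull : ∀ (S : ℝ × ℝ × ℝ → ℝ), ContDiff ℝ (⊤ : ℕ∞) S →
      Good 0 (fun x : V4 => S (x 0, x 2, x 3)) := fun S hS => good_of_contDiff (hS.comp hπ)
  -- components of Ξ
  have hΞc : ∀ ν, Good (w ν) (fun x => Ξ x ν) := by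
    intro ν
    fin_cases ν
    · exact ((good_pull Xτ hXτ).congr (fun x => by rw [hΞ x]; simp)).mono (by simp [hw])
    · have : Good 1 (fun x => x 1 * Xρ (x 0, x 2, x 3)) := good_coord1.mul (good_pull Xρ hXρ)
      exact (this.congr (fun x => by rw [hΞ x]; simp)).mono (by simp [hw])
    · exact ((good_pull Xy hXy).congr (fun x => by rw [hΞ x]; simp)).mono (by simp [hw])
    · exact ((good_pull Xz hXz).congr (fun x => by rw [hΞ x]; simp)).mono (by simp [hw])
  -- components of h
  have hhc : ∀ ν, Good 2 (fun x => h x ν) := by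
    intro ν
    apply good_two_of_bounds (contDiff_pi.mp hsm ν) (hO ν)
    exact (hOd ν).2.2.2
  -- components of ξ
  have hξc : ∀ ν, Good (w ν) (fun x => ξ x ν) := by
    intro ν
    have : Good (w ν) (fun x => Ξ x ν + h x ν) :=
      (hΞc ν).add ((hhc ν).mono (by by_cases hν : ν = 1 <;> simp [hw, hν]))
    exact this.congr (fun x => by rw [hξ x]; rfl)
  have hwm : ∀ μ ν : Fin 4, w μ ≤ w ν + (w μ - if ν = 1 then 1 else 0) := by
    intro μ ν
    by_cases hν : ν = 1 <;> by_cases hμ : μ = 1 <;> simp [hw, hν, hμ]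
  -- main induction
  have key : ∀ n : ℕ, (∀ μ, Good (w μ) ((act Ξ)^[n] (coordFn μ))) ∧
      (∀ μ, Good 2 (fun x => (act ξ)^[n] (coordFn μ) x - (act Ξ)^[n] (coordFn μ) x)) := by
    intro n
    induction n with
    | zero =>
      constructor
      · intro μ
        simp only [Function.iterate_zero, id_eq]
        by_cases hμ : μ = 1
        · subst hμ; exact good_coord1.mono (by simp [hw])
        · exact (good_of_contDiff
            (ContinuousLinearMap.proj (R := ℝ) (φ := fun _ : Fin 4 => ℝ) μ).contDiff).mono
            (by simp [hw, hμ])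
      · intro μ
        simp only [Function.iterate_zero, id_eq]
        exact (good_zero 2).congr (fun x => by ring)
    | succ n ih =>
      obtain ⟨ih1, ih2⟩ := ih
      constructor
      · intro μ
        rw [Function.iterate_succ_apply']
        have := good_act (c := fun ν x => Ξ x ν) (k := w) hΞc (ih1 μ) (hwm μ)
        exact this.congr (fun x => rfl)
      · intro μ
        rw [Function.iterate_succ_apply', Function.iterate_succ_apply']
        set F := (act Ξ)^[n] (coordFn μ) with hF
        set G := (act ξ)^[n] (coordFn μ) with hG
        set r : V4 → ℝ := fun x => G x - F x with hr
        have hFsm : ContDiff ℝ (⊤ : ℕ∞) F := (ih1 μ).smooth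
        have hrsm : ContDiff ℝ (⊤ : ℕ∞) r := (ih2 μ).smooth
        have hGFr : G = fun x => F x + r x := by funext x; simp [hr]
        have hpdG : ∀ ν x, pd ν G x = pd ν F x + pd ν r x := by
          intro ν x
          rw [hGFr, pd_add (hFsm.differentiable (by simp)) (hrsm.differentiable (by simp))]
        have goodA : Good 2 (fun x => ∑ ν, h x ν * pd ν F x) :=
          good_act (c := fun ν x => h x ν) (k := fun _ => 2) hhc (ih1 μ)
            (fun ν => Nat.le_add_right 2 _)
        have goodB : Good 2 (fun x => ∑ ν, ξ x ν * pd ν r x) :=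
          good_act (c := fun ν x => ξ x ν) (k := w) hξc (ih2 μ)
            (fun ν => by by_cases hν : ν = 1 <;> simp [hw, hν])
        have := goodA.add goodB
        apply this.congr
        intro x
        show (∑ ν, h x ν * pd ν F x) + (∑ ν, ξ x ν * pd ν r x)
            = act ξ G x - act Ξ F x
        have e1 : act ξ G x = ∑ ν, ξ x ν * pd ν G x := rfl
        have e2 : act Ξ F x = ∑ ν, Ξ x ν * pd ν F x := rfl
        rw [e1, e2, ← Finset.sum_sub_distrib, ← Finset.sum_add_distrib]
        apply Finset.sum_congr rfl
        intro ν _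
        rw [hpdG ν x, hξ x]
        show h x ν * pd ν F x + (Ξ x ν + h x ν) * pd ν r x
            = (Ξ x ν + h x ν) * (pd ν F x + pd ν r x) - Ξ x ν * pd ν F x
        ring
  intro lam n
  obtain ⟨k1, k2⟩ := key n
  constructor
  · intro μ
    have := (k1 μ).isO
    by_cases hμ : μ = 1 <;> simp [hw, hμ] at this ⊢ <;> exact this
  · refine ⟨fun μ x => lam ^ n / n.factorial *
      ((act ξ)^[n] (coordFn μ) x - (act Ξ)^[n] (coordFn μ) x), ?_, ?_⟩
    · intro μ
      exact (k2 μ).isO.const_mul _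
    · intro μ x
      ring
end
end

section
/- The asymptotic Killing vectors of the fixed AdS₃-type deformed metric: for the metric g = ḡ + δg on (t,r,φ) with ḡ = diag(−(r²/l²+1), (r²/l²+1)^{−1}, r²) and δg as in Eq. (3) of the paper (δg_{tφ} = A(r²/l²+1), δg_{φφ} = A²(r²/l²+1), 0 < |A| < l), any Killing vector field ξ of g whose components are polynomial in t and φ with r-dependent coefficients and which preserves g exactly (£_ξ g = 0) with ξ^r = 0 must be a constant-coefficient linear combination of ∂_t and ∂_φ. -/
noncomputable section

abbrev V3 := Fin 3 → ℝ

/-- Partial derivative in the i-th coordinate direction. -/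
def pd3 (i : Fin 3) (f : V3 → ℝ) (x : V3) : ℝ := fderiv ℝ f x (Pi.single i 1)

/-- The deformed AdS₃ metric g = ḡ + δg in coordinates (t,r,φ). -/
def gAdS (l A : ℝ) (x : V3) : Matrix (Fin 3) (Fin 3) ℝ :=
  !![-((x 1) ^ 2 / l ^ 2 + 1), 0, A * ((x 1) ^ 2 / l ^ 2 + 1);
     0, ((x 1) ^ 2 / l ^ 2 + 1)⁻¹, 0;
     A * ((x 1) ^ 2 / l ^ 2 + 1), 0, (x 1) ^ 2 + A ^ 2 * ((x 1) ^ 2 / l ^ 2 + 1)]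

/-- Lie derivative of a metric:
(£_ξg)_{μν} = ξ^α∂_αg_{μν} + g_{αν}∂_μξ^α + g_{μα}∂_νξ^α. -/
def lieMetric (ξ : V3 → V3) (g : V3 → Matrix (Fin 3) (Fin 3) ℝ) (x : V3) (μ ν : Fin 3) : ℝ :=
  (∑ α, ξ x α * pd3 α (fun p => g p μ ν) x)
    + (∑ α, g x α ν * pd3 μ (fun p => ξ p α) x)
    + ∑ α, g x μ α * pd3 ν (fun p => ξ p α) x

/- ## Auxiliary lemmas -/

lemma pd3_zero' (i : Fin 3) (x : V3) : pd3 i (fun _ : V3 => (0:ℝ)) x = 0 := by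
  simp [pd3]

/-- A function that factors through the radial coordinate has vanishing partial
derivatives in the non-radial directions. -/
lemma pd3_radial {F : V3 → ℝ} {G : ℝ → ℝ} (hFG : ∀ p, F p = G (p 1))
    (x : V3) (hG : DifferentiableAt ℝ G (x 1)) {i : Fin 3} (hi : i ≠ 1) :
    pd3 i F x = 0 := by
  have hF : F = fun p : V3 => G (p 1) := funext hFG
  subst hF
  have hproj : HasFDerivAt (fun p : V3 => p 1)
      (ContinuousLinearMap.proj (R := ℝ) (φ := fun _ : Fin 3 => ℝ) 1) x := by
    exact (ContinuousLinearMap.proj (R := ℝ) (φ := fun _ : Fin 3 => ℝ) 1).hasFDerivAt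
  have hcomp : HasFDerivAt (fun p : V3 => G (p 1))
      ((fderiv ℝ G (x 1)).comp (ContinuousLinearMap.proj 1)) x :=
    (hG.hasFDerivAt).comp x hproj
  rw [pd3, hcomp.fderiv]
  simp [Pi.single_eq_of_ne (Ne.symm hi)]

/-- update x i t = x + (t - x i) • single i 1 -/
lemma update_eq_affine (x : V3) (i : Fin 3) (t : ℝ) :
    Function.update x i t = x + (t - x i) • (Pi.single i 1 : V3) := by
  funext j
  by_cases h : j = i
  · subst h; simp
  · simp [Function.update_of_ne h, Pi.single_eq_of_ne h]

/-- Constancy along a coordinate line from a vanishing partial derivative. -/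
lemma line_const (F : V3 → ℝ) (hF : Differentiable ℝ F) (i : Fin 3) (x : V3)
    {s : Set ℝ} (hs : Convex ℝ s)
    (h0 : ∀ t ∈ s, pd3 i F (Function.update x i t) = 0) {a b : ℝ}
    (ha : a ∈ s) (hb : b ∈ s) :
    F (Function.update x i a) = F (Function.update x i b) := by
  set B : ℝ → V3 := fun t => Function.update x i t with hB
  have hBt : ∀ t : ℝ, HasDerivAt B (Pi.single i 1) t := by
    intro t
    have h1 : HasDerivAt (fun t : ℝ => x + (t - x i) • (Pi.single i 1 : V3))
        ((1:ℝ) • (Pi.single i 1 : V3)) t :=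
      (((hasDerivAt_id t).sub_const (x i)).smul_const (Pi.single i 1 : V3)).const_add x
    have : B = fun t : ℝ => x + (t - x i) • (Pi.single i 1 : V3) := by
      funext t; exact update_eq_affine x i t
    rw [this]
    simpa using h1
  have hh : ∀ t ∈ s, HasDerivWithinAt (fun t => F (B t)) 0 s t := by
    intro t ht
    have := (hF (B t)).hasFDerivAt.comp_hasDerivAt t (hBt t)
    have h2 : fderiv ℝ F (B t) (Pi.single i 1) = 0 := h0 t ht
    rw [h2] at this
    exact this.hasDerivWithinAt
  have key := hs.norm_image_sub_le_of_norm_hasDerivWithin_le (C := 0) (f' := fun _ => (0:ℝ))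
    hh (fun t _ => by simp) hb ha
  have h1 : |F (B a) - F (B b)| ≤ 0 := by simpa using key
  have h2 : (0:ℝ) ≤ |F (B a) - F (B b)| := abs_nonneg _
  have h3 : F (B a) - F (B b) = 0 := abs_eq_zero.mp (le_antisymm h1 h2)
  have h4 := sub_eq_zero.mp h3
  simpa [hB] using h4

/-- The linear map v ↦ update v 1 0. -/
def U3 : V3 →L[ℝ] V3 :=
  ContinuousLinearMap.pi (fun j => if j = (1:Fin 3) then 0 else ContinuousLinearMap.proj j)

lemma U3_apply (v : V3) : U3 v = Function.update v 1 0 := by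
  funext j
  by_cases h : j = 1
  · subst h; simp [U3]
  · simp [U3, h, Function.update_of_ne h]

lemma hasFDerivAt_updateOne (x : V3) :
    HasFDerivAt (fun p : V3 => Function.update p 1 (1:ℝ)) U3 x := by
  have hfun : (fun p : V3 => Function.update p 1 (1:ℝ))
      = fun p => U3 p + (Pi.single 1 1 : V3) := by
    funext p j
    by_cases h : j = 1
    · subst h; simp [U3_apply]
    · simp [U3_apply, Function.update_of_ne h, Pi.single_eq_of_ne h]
  rw [hfun]
  exact U3.hasFDerivAt.add_const _

/-- If F is invariant under changing the radial coordinate (within the region r > 0),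
then its non-radial partial derivatives do not depend on the radial coordinate. -/
lemma pd_transport (F : V3 → ℝ) (hF : Differentiable ℝ F)
    (hFc : ∀ (p : V3) (s : ℝ), 0 < p 1 → 0 < s → F (Function.update p 1 s) = F p)
    (i : Fin 3) (hi : i ≠ 1) (x : V3) (s : ℝ) (hx : 0 < x 1) (hs : 0 < s) :
    pd3 i F (Function.update x 1 s) = pd3 i F x := by
  set G : V3 → ℝ := fun p => F (Function.update p 1 1) with hG
  have hopen : IsOpen {p : V3 | 0 < p 1} := isOpen_lt continuous_const (continuous_apply 1)
  have hfd : ∀ p : V3, 0 < p 1 → pd3 i F p = pd3 i F (Function.update p 1 1) := by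
    intro p hp
    have hev : F =ᶠ[nhds p] G :=
      Filter.eventuallyEq_of_mem (hopen.mem_nhds hp)
        (fun q hq => ((hFc q 1 hq one_pos).symm : F q = G q))
    have h1 : fderiv ℝ F p = fderiv ℝ G p := hev.fderiv_eq
    have h2 : HasFDerivAt G ((fderiv ℝ F (Function.update p 1 1)).comp U3) p :=
      (hF _).hasFDerivAt.comp p (hasFDerivAt_updateOne p)
    rw [pd3, h1, h2.fderiv]
    simp only [ContinuousLinearMap.coe_comp', Function.comp_apply]
    rw [pd3]
    congr 1
    rw [U3_apply]
    funext j'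
    by_cases h : j' = 1
    · subst h; simp [Pi.single_eq_of_ne (Ne.symm hi)]
    · simp [Function.update_of_ne h]
  have e1 := hfd x hx
  have e2 := hfd (Function.update x 1 s) (by simpa using hs)
  rw [e1, e2, Function.update_idem]

set_option maxHeartbeats 1000000 in
/-- Any exact Killing vector ξ of the deformed AdS₃ metric with ξ^r = 0 whose
components ξ^t, ξ^φ are polynomial in t and φ with smooth r-dependent
coefficients is a constant-coefficient linear combination of ∂_t and ∂_φ. -/
theorem killing_vectors_deformed_AdS3 (l A : ℝ)
    (hl : 0 < l) (hA0 : A ≠ 0) (hA : |A| < l)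
    (ξt ξφ : V3 → ℝ)
    (N : ℕ) (c e : ℕ → ℕ → ℝ → ℝ)
    (hc : ∀ i j, ContDiff ℝ (⊤ : ℕ∞) (c i j)) (he : ∀ i j, ContDiff ℝ (⊤ : ℕ∞) (e i j))
    (hξt : ∀ x : V3, ξt x
        = ∑ i ∈ Finset.range N, ∑ j ∈ Finset.range N, c i j (x 1) * (x 0) ^ i * (x 2) ^ j)
    (hξφ : ∀ x : V3, ξφ x
        = ∑ i ∈ Finset.range N, ∑ j ∈ Finset.range N, e i j (x 1) * (x 0) ^ i * (x 2) ^ j)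
    (hKilling : ∀ x : V3, 0 < x 1 →
      ∀ μ ν : Fin 3, lieMetric (fun p => ![ξt p, 0, ξφ p]) (gAdS l A) x μ ν = 0) :
    ∃ a b : ℝ, ∀ x : V3, 0 < x 1 → ξt x = a ∧ ξφ x = b := by
  -- differentiability of the components
  have hdiff : ∀ (F : V3 → ℝ) (d : ℕ → ℕ → ℝ → ℝ), (∀ i j, ContDiff ℝ (⊤ : ℕ∞) (d i j)) →
      (∀ x : V3, F x = ∑ i ∈ Finset.range N, ∑ j ∈ Finset.range N,
        d i j (x 1) * (x 0) ^ i * (x 2) ^ j) → Differentiable ℝ F := by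
    intro F d hd hF
    have : F = fun x : V3 =>
        ∑ i ∈ Finset.range N, ∑ j ∈ Finset.range N, d i j (x 1) * (x 0) ^ i * (x 2) ^ j :=
      funext hF
    rw [this]
    apply Differentiable.fun_sum; intro i _
    apply Differentiable.fun_sum; intro j _
    have h1 : Differentiable ℝ (d i j) := (hd i j).differentiable (by simp)
    fun_prop
  have hdt : Differentiable ℝ ξt := hdiff ξt c hc hξt
  have hdφ : Differentiable ℝ ξφ := hdiff ξφ e he hξφ
  have hA2 : 0 < A ^ 2 := lt_of_le_of_ne (sq_nonneg A) (Ne.symm (pow_ne_zero 2 hA0))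
  -- extraction of the Killing equations
  have hpdg0 : ∀ (μ ν : Fin 3) (i : Fin 3), i ≠ 1 → ∀ x : V3,
      pd3 i (fun p => gAdS l A p μ ν) x = 0 := by
    intro μ ν i hi x
    refine pd3_radial (G := fun s : ℝ => gAdS l A ![0, s, 0] μ ν) ?_ x ?_ hi
    · intro p; simp [gAdS]
    · fin_cases μ <;> fin_cases ν <;> simp [gAdS] <;>
        first
        | fun_prop
        | exact DifferentiableAt.inv (by fun_prop) (by positivity)
  have hg00 : ∀ p : V3, gAdS l A p 0 0 = -((p 1)^2/l^2+1) := by intro p; simp [gAdS]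
  have hg01 : ∀ p : V3, gAdS l A p 0 1 = 0 := by intro p; simp [gAdS]
  have hg02 : ∀ p : V3, gAdS l A p 0 2 = A*((p 1)^2/l^2+1) := by intro p; simp [gAdS]
  have hg10 : ∀ p : V3, gAdS l A p 1 0 = 0 := by intro p; simp [gAdS]
  have hg11 : ∀ p : V3, gAdS l A p 1 1 = ((p 1)^2/l^2+1)⁻¹ := by intro p; simp [gAdS]
  have hg12 : ∀ p : V3, gAdS l A p 1 2 = 0 := by intro p; simp [gAdS]
  have hg20 : ∀ p : V3, gAdS l A p 2 0 = A*((p 1)^2/l^2+1) := by intro p; simp [gAdS]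
  have hg21 : ∀ p : V3, gAdS l A p 2 1 = 0 := by intro p; simp [gAdS]
  have hg22 : ∀ p : V3, gAdS l A p 2 2 = (p 1)^2 + A^2*((p 1)^2/l^2+1) := by
    intro p; simp [gAdS]
  have hr1 : ∀ i : Fin 3, i ≠ 1 → ∀ x : V3,
      pd3 i (fun p : V3 => -((p 1)^2/l^2+1)) x = 0 :=
    fun i hi x => pd3_radial (G := fun s : ℝ => -(s^2/l^2+1)) (fun p => rfl) x (by fun_prop) hi
  have hr2 : ∀ i : Fin 3, i ≠ 1 → ∀ x : V3,
      pd3 i (fun p : V3 => A*((p 1)^2/l^2+1)) x = 0 :=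
    fun i hi x => pd3_radial (G := fun s : ℝ => A*(s^2/l^2+1)) (fun p => rfl) x (by fun_prop) hi
  have hr3 : ∀ i : Fin 3, i ≠ 1 → ∀ x : V3,
      pd3 i (fun p : V3 => (p 1)^2 + A^2*((p 1)^2/l^2+1)) x = 0 :=
    fun i hi x => pd3_radial (G := fun s : ℝ => s^2 + A^2*(s^2/l^2+1)) (fun p => rfl) x
      (by fun_prop) hi
  have hEqs : ∀ y : V3, 0 < y 1 →
      (-(y 1 ^ 2 / l ^ 2 + 1) * pd3 0 ξt y + A * (y 1 ^ 2 / l ^ 2 + 1) * pd3 0 ξφ y = 0)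
      ∧ (-(y 1 ^ 2 / l ^ 2 + 1) * pd3 1 ξt y + A * (y 1 ^ 2 / l ^ 2 + 1) * pd3 1 ξφ y = 0)
      ∧ (A * (y 1 ^ 2 / l ^ 2 + 1) * pd3 1 ξt y
          + (y 1 ^ 2 + A ^ 2 * (y 1 ^ 2 / l ^ 2 + 1)) * pd3 1 ξφ y = 0)
      ∧ (A * (y 1 ^ 2 / l ^ 2 + 1) * pd3 2 ξt y
          + (y 1 ^ 2 + A ^ 2 * (y 1 ^ 2 / l ^ 2 + 1)) * pd3 2 ξφ y = 0)
      ∧ (A * (y 1 ^ 2 / l ^ 2 + 1) * pd3 0 ξt y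
          + (y 1 ^ 2 + A ^ 2 * (y 1 ^ 2 / l ^ 2 + 1)) * pd3 0 ξφ y
          + (-(y 1 ^ 2 / l ^ 2 + 1) * pd3 2 ξt y + A * (y 1 ^ 2 / l ^ 2 + 1) * pd3 2 ξφ y)
          = 0) := by
    intro y hy
    have E00 := hKilling y hy 0 0
    have E01 := hKilling y hy 0 1
    have E12 := hKilling y hy 1 2
    have E22 := hKilling y hy 2 2
    have E02 := hKilling y hy 0 2
    simp only [lieMetric, Fin.sum_univ_three, Matrix.cons_val_zero, Matrix.cons_val_one,
      Matrix.head_cons, Matrix.cons_val_two, Matrix.tail_cons,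
      hpdg0 _ _ 0 (by decide), hpdg0 _ _ 2 (by decide), pd3_zero',
      hg00, hg01, hg02, hg10, hg11, hg12, hg20, hg21, hg22,
      hr1 0 (by decide), hr1 2 (by decide), hr2 0 (by decide), hr2 2 (by decide),
      hr3 0 (by decide), hr3 2 (by decide),
      mul_zero, zero_mul, add_zero, zero_add] at E00 E01 E12 E22 E02
    refine ⟨by linarith, E01, E12, by linarith, E02⟩
  -- Step 1: radial derivatives vanish
  have hW : ∀ y : V3, 0 < y 1 → pd3 1 ξt y = 0 ∧ pd3 1 ξφ y = 0 := by
    intro y hy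
    obtain ⟨-, E01, E12, -, -⟩ := hEqs y hy
    have hf : 0 < y 1 ^ 2 / l ^ 2 + 1 := by positivity
    have hwt' : (y 1 ^ 2 / l ^ 2 + 1) * (pd3 1 ξt y - A * pd3 1 ξφ y) = 0 := by
      linear_combination -E01
    have hwt : pd3 1 ξt y = A * pd3 1 ξφ y :=
      sub_eq_zero.mp ((mul_eq_zero.mp hwt').resolve_left hf.ne')
    have hco : 0 < y 1 ^ 2 + 2 * A ^ 2 * (y 1 ^ 2 / l ^ 2 + 1) := by
      nlinarith [sq_nonneg (y 1), mul_pos hA2 hf]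
    have hwφ' : (y 1 ^ 2 + 2 * A ^ 2 * (y 1 ^ 2 / l ^ 2 + 1)) * pd3 1 ξφ y = 0 := by
      linear_combination E12 - A * (y 1 ^ 2 / l ^ 2 + 1) * hwt
    have hwφ : pd3 1 ξφ y = 0 := (mul_eq_zero.mp hwφ').resolve_left hco.ne'
    exact ⟨by rw [hwt, hwφ, mul_zero], hwφ⟩
  -- Step 2: the components are invariant under changes of the radial coordinate
  have hrconst : ∀ (F : V3 → ℝ), Differentiable ℝ F →
      (∀ y : V3, 0 < y 1 → pd3 1 F y = 0) →
      ∀ (p : V3) (s : ℝ), 0 < p 1 → 0 < s → F (Function.update p 1 s) = F p := by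
    intro F hF h1 p s hp hs
    have key := line_const F hF 1 p (convex_Ioi (0:ℝ))
      (fun t ht => h1 (Function.update p 1 t) (by simpa using ht)) (a := s) (b := p 1) hs hp
    rw [Function.update_eq_self] at key
    exact key
  have hrct : ∀ (p : V3) (s : ℝ), 0 < p 1 → 0 < s →
      ξt (Function.update p 1 s) = ξt p :=
    hrconst ξt hdt (fun y hy => (hW y hy).1)
  have hrcφ : ∀ (p : V3) (s : ℝ), 0 < p 1 → 0 < s →
      ξφ (Function.update p 1 s) = ξφ p :=
    hrconst ξφ hdφ (fun y hy => (hW y hy).2)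
  -- Step 3: the t- and φ-derivatives vanish
  have hU : ∀ x : V3, 0 < x 1 → pd3 0 ξt x = 0 ∧ pd3 0 ξφ x = 0
      ∧ pd3 2 ξt x = 0 ∧ pd3 2 ξφ x = 0 := by
    intro x hx
    have hup1 : (Function.update x 1 (1:ℝ)) 1 = 1 := Function.update_self 1 1 x
    have hup2 : (Function.update x 1 (2:ℝ)) 1 = 2 := Function.update_self 1 2 x
    obtain ⟨K1, -, -, K4, K5⟩ := hEqs (Function.update x 1 1) (by rw [hup1]; norm_num)
    obtain ⟨-, -, -, L4, -⟩ := hEqs (Function.update x 1 2) (by rw [hup2]; norm_num)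
    rw [hup1] at K1 K4 K5
    rw [hup2] at L4
    have T0t := pd_transport ξt hdt hrct 0 (by decide) x 1 hx one_pos
    have T0φ := pd_transport ξφ hdφ hrcφ 0 (by decide) x 1 hx one_pos
    have T2t := pd_transport ξt hdt hrct 2 (by decide) x 1 hx one_pos
    have T2φ := pd_transport ξφ hdφ hrcφ 2 (by decide) x 1 hx one_pos
    have S0t := pd_transport ξt hdt hrct 0 (by decide) x 2 hx two_pos
    have S0φ := pd_transport ξφ hdφ hrcφ 0 (by decide) x 2 hx two_pos
    have S2t := pd_transport ξt hdt hrct 2 (by decide) x 2 hx two_pos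
    have S2φ := pd_transport ξφ hdφ hrcφ 2 (by decide) x 2 hx two_pos
    rw [T0t, T0φ] at K1
    rw [T2t, T2φ] at K4
    rw [T0t, T0φ, T2t, T2φ] at K5
    rw [S2t, S2φ] at L4
    have hf1 : (0:ℝ) < 1 ^ 2 / l ^ 2 + 1 := by positivity
    -- φ-derivatives
    have hvφ : pd3 2 ξφ x = 0 := by
      linear_combination (-(1:ℝ)/3) * (((2:ℝ) ^ 2 / l ^ 2 + 1) * K4
        - ((1:ℝ) ^ 2 / l ^ 2 + 1) * L4)
    have hvt' : A * (((1:ℝ) ^ 2 / l ^ 2 + 1) * pd3 2 ξt x) = 0 := by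
      linear_combination K4 - ((1:ℝ) ^ 2 + A ^ 2 * ((1:ℝ) ^ 2 / l ^ 2 + 1)) * hvφ
    have hvt : pd3 2 ξt x = 0 :=
      (mul_eq_zero.mp ((mul_eq_zero.mp hvt').resolve_left hA0)).resolve_left hf1.ne'
    -- t-derivatives
    have hut' : ((1:ℝ) ^ 2 / l ^ 2 + 1) * (pd3 0 ξt x - A * pd3 0 ξφ x) = 0 := by
      linear_combination -K1
    have hut : pd3 0 ξt x = A * pd3 0 ξφ x :=
      sub_eq_zero.mp ((mul_eq_zero.mp hut').resolve_left hf1.ne')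
    have hco : (0:ℝ) < 1 ^ 2 + 2 * A ^ 2 * (1 ^ 2 / l ^ 2 + 1) := by
      nlinarith [mul_pos hA2 hf1]
    have huφ' : ((1:ℝ) ^ 2 + 2 * A ^ 2 * (1 ^ 2 / l ^ 2 + 1)) * pd3 0 ξφ x = 0 := by
      linear_combination K5 - A * ((1:ℝ) ^ 2 / l ^ 2 + 1) * hut
        + ((1:ℝ) ^ 2 / l ^ 2 + 1) * hvt - A * ((1:ℝ) ^ 2 / l ^ 2 + 1) * hvφ
    have huφ : pd3 0 ξφ x = 0 := (mul_eq_zero.mp huφ').resolve_left hco.ne'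
    exact ⟨by rw [hut, huφ, mul_zero], huφ, hvt, hvφ⟩
  -- Step 4: assemble constancy
  have hconst : ∀ (F : V3 → ℝ), Differentiable ℝ F →
      (∀ p s, 0 < p 1 → 0 < s → F (Function.update p 1 s) = F p) →
      (∀ y : V3, 0 < y 1 → pd3 0 F y = 0) →
      (∀ y : V3, 0 < y 1 → pd3 2 F y = 0) →
      ∀ x : V3, 0 < x 1 → F x = F ![0, 1, 0] := by
    intro F hF hrc h0 h2 x hx
    have step1 : F x = F (Function.update x 1 1) := (hrc x 1 hx one_pos).symm
    set y := Function.update x 1 1 with hy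
    have hy1 : y 1 = 1 := Function.update_self 1 1 x
    have step2 : F y = F (Function.update y 0 0) := by
      have key := line_const F hF 0 y convex_univ
        (fun t _ => h0 (Function.update y 0 t)
          (by rw [Function.update_of_ne (by decide) t y, hy1]; norm_num))
        (a := y 0) (b := 0) trivial trivial
      rw [Function.update_eq_self] at key
      exact key
    set z := Function.update y 0 0 with hz
    have hz1 : z 1 = 1 := by
      rw [hz, Function.update_of_ne (by decide) 0 y, hy1]
    have step3 : F z = F (Function.update z 2 0) := by
      have key := line_const F hF 2 z convex_univ
        (fun t _ => h2 (Function.update z 2 t)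
          (by rw [Function.update_of_ne (by decide) t z, hz1]; norm_num))
        (a := z 2) (b := 0) trivial trivial
      rw [Function.update_eq_self] at key
      exact key
    have hfinal : Function.update z 2 0 = ![0, 1, 0] := by
      funext j
      fin_cases j <;>
        simp [hz, hy, Function.update] <;> norm_num
    rw [step1, step2, step3, hfinal]
  refine ⟨ξt ![0, 1, 0], ξφ ![0, 1, 0], fun x hx => ⟨?_, ?_⟩⟩
  · exact hconst ξt hdt hrct (fun y hy => (hU y hy).1) (fun y hy => (hU y hy).2.2.1) x hx
  · exact hconst ξφ hdφ hrcφ (fun y hy => (hU y hy).2.1) (fun y hy => (hU y hy).2.2.2) x hx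
end
end
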